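/- Fix masses m₁, m₂, m₃ > 0 and m = m₁+m₂+m₃. For (x,y) ∈ ℝ² not equal to any of the binary collision points (1,0), (−1/2, √3/2), (−1/2, −√3/2), define r₁₂² = (x−1)²+y², r₁₃² = (x+1/2)²+(y−√3/2)², r₂₃² = (x+1/2)²+(y+√3/2)², I(x,y) = (m₁m₂r₁₂² + m₁m₃r₁₃² + m₂m₃r₂₃²)/m, and the shape potential V(x,y) = √I(x,y)·(m₁m₂/r₁₂ + m₁m₃/r₁₃ + m₂m₃/r₂₃). Then x·∂V/∂x + y·∂V/∂y = φ(x,y)·(1 − x² − y²), where φ(x,y) = (m₁m₂m₃/(2m·√I(x,y)))·(m₁g₁ + m₂g₂ + m₃g₃) with g₁ = (r₁₃²−r₁₂²)(r₁₂⁻³−r₁₃⁻³), g₂ = (r₂₃²−r₁₂²)(r₁₂⁻³−r₂₃⁻³), g₃ = (r₂₃²−r₁₃²)(r₁₃⁻³−r₂₃⁻³). Moreover φ(x,y) ≥ 0, with φ(x,y) = 0 if and only if (x,y) = (0,0). -/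

import Mathlib

/-!
Every binary collision point `c` lies on the unit circle, so the radial derivative of a squared
distance is `2 z · (z - c) = |z - c|² - ε` with `ε = 1 - |z|²`. Since `V = √I · U` is invariant
under scaling, the terms without `ε` cancel, and by `m I = Σ wᵢ rᵢ²` (with `wᵢ` the mass products)
the coefficient of `ε` is, up to the factor `1 / (2 m √I)`,
`(Σ wᵢ rᵢ²)(Σ wᵢ rᵢ⁻³) - (Σ wᵢ)(Σ wᵢ rᵢ⁻¹) = Σ_{i<j} wᵢ wⱼ (rⱼ² - rᵢ²)(rᵢ⁻³ - rⱼ⁻³)`.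
Each summand is `≥ 0` and vanishes only when `rᵢ = rⱼ`; all three vanish exactly at the
equilateral shape `(0, 0)`.
-/

noncomputable section

/-- Squared mutual distance r₁₂² at unit size, in shape-sphere coordinates. -/
def r12sq (x y : ℝ) : ℝ := (x - 1) ^ 2 + y ^ 2

/-- Squared mutual distance r₁₃². -/
def r13sq (x y : ℝ) : ℝ := (x + 1 / 2) ^ 2 + (y - Real.sqrt 3 / 2) ^ 2

/-- Squared mutual distance r₂₃². -/
def r23sq (x y : ℝ) : ℝ := (x + 1 / 2) ^ 2 + (y + Real.sqrt 3 / 2) ^ 2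

/-- The moment of inertia I(x,y) (Lagrange's identity). -/
def Ifun (m₁ m₂ m₃ x y : ℝ) : ℝ :=
  (m₁ * m₂ * r12sq x y + m₁ * m₃ * r13sq x y + m₂ * m₃ * r23sq x y) / (m₁ + m₂ + m₃)

/-- The shape potential V(x,y) = √I · (m₁m₂/r₁₂ + m₁m₃/r₁₃ + m₂m₃/r₂₃). -/
def Vfun (m₁ m₂ m₃ x y : ℝ) : ℝ :=
  Real.sqrt (Ifun m₁ m₂ m₃ x y) *
    (m₁ * m₂ / Real.sqrt (r12sq x y) + m₁ * m₃ / Real.sqrt (r13sq x y)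
      + m₂ * m₃ / Real.sqrt (r23sq x y))

/-- The factor φ(x,y) = (m₁m₂m₃/(2m√I))·(m₁g₁ + m₂g₂ + m₃g₃). -/
def phifun (m₁ m₂ m₃ x y : ℝ) : ℝ :=
  m₁ * m₂ * m₃ / (2 * (m₁ + m₂ + m₃) * Real.sqrt (Ifun m₁ m₂ m₃ x y)) *
    (m₁ * (r13sq x y - r12sq x y) * (1 / Real.sqrt (r12sq x y) ^ 3 - 1 / Real.sqrt (r13sq x y) ^ 3)
      + m₂ * (r23sq x y - r12sq x y) * (1 / Real.sqrt (r12sq x y) ^ 3 - 1 / Real.sqrt (r23sq x y) ^ 3)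
      + m₃ * (r23sq x y - r13sq x y) * (1 / Real.sqrt (r13sq x y) ^ 3 - 1 / Real.sqrt (r23sq x y) ^ 3))

def HasRadialDerivAt (f : ℝ → ℝ → ℝ) (d x y : ℝ) : Prop :=
  ∃ fx fy : ℝ, HasDerivAt (fun s => f s y) fx x ∧ HasDerivAt (fun s => f x s) fy y ∧
    x * fx + y * fy = d

namespace HasRadialDerivAt

variable {f g : ℝ → ℝ → ℝ} {d e x y : ℝ}

theorem congr_deriv (hf : HasRadialDerivAt f d x y) (h : d = e) : HasRadialDerivAt f e x y :=
  h ▸ hf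

theorem add (hf : HasRadialDerivAt f d x y) (hg : HasRadialDerivAt g e x y) :
    HasRadialDerivAt (fun a b => f a b + g a b) (d + e) x y := by
  obtain ⟨fx, fy, hfx, hfy, rfl⟩ := hf
  obtain ⟨gx, gy, hgx, hgy, rfl⟩ := hg
  exact ⟨_, _, hfx.add hgx, hfy.add hgy, by ring⟩

theorem mul (hf : HasRadialDerivAt f d x y) (hg : HasRadialDerivAt g e x y) :
    HasRadialDerivAt (fun a b => f a b * g a b) (d * g x y + f x y * e) x y := by
  obtain ⟨fx, fy, hfx, hfy, rfl⟩ := hf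
  obtain ⟨gx, gy, hgx, hgy, rfl⟩ := hg
  exact ⟨_, _, hfx.mul hgx, hfy.mul hgy, by ring⟩

theorem const_mul (c : ℝ) (hf : HasRadialDerivAt f d x y) :
    HasRadialDerivAt (fun a b => c * f a b) (c * d) x y := by
  obtain ⟨fx, fy, hfx, hfy, rfl⟩ := hf
  exact ⟨_, _, hfx.const_mul c, hfy.const_mul c, by ring⟩

theorem div_const (hf : HasRadialDerivAt f d x y) (c : ℝ) :
    HasRadialDerivAt (fun a b => f a b / c) (d / c) x y := by
  obtain ⟨fx, fy, hfx, hfy, rfl⟩ := hf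
  exact ⟨_, _, hfx.div_const c, hfy.div_const c, by ring⟩

theorem const_div (c : ℝ) (hf : HasRadialDerivAt f d x y) (hf₀ : f x y ≠ 0) :
    HasRadialDerivAt (fun a b => c / f a b) (-(c * d) / f x y ^ 2) x y := by
  obtain ⟨fx, fy, hfx, hfy, rfl⟩ := hf
  exact ⟨_, _, (hasDerivAt_const x c).div hfx hf₀, (hasDerivAt_const y c).div hfy hf₀, by ring⟩

theorem sqrt (hf : HasRadialDerivAt f d x y) (hf₀ : f x y ≠ 0) :
    HasRadialDerivAt (fun a b => √(f a b)) (d / (2 * √(f x y))) x y := by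
  obtain ⟨fx, fy, hfx, hfy, rfl⟩ := hf
  exact ⟨_, _, hfx.sqrt hf₀, hfy.sqrt hf₀, by ring⟩

end HasRadialDerivAt

def sqDist (a b x y : ℝ) : ℝ := (x - a) ^ 2 + (y - b) ^ 2

theorem sqDist_pos {a b x y : ℝ} (h : (x, y) ≠ (a, b)) : 0 < sqDist a b x y := by
  rcases eq_or_ne x a with rfl | hx
  · have hy : y - b ≠ 0 := sub_ne_zero.2 fun hy => h (by rw [hy])
    unfold sqDist; positivity
  · have hx : x - a ≠ 0 := sub_ne_zero.2 hx
    unfold sqDist; positivity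

/-- `2 z · (z - c) = |z - c|² + |z|² - |c|²`, with `|c| = 1`. -/
theorem hasRadialDerivAt_sqDist {a b x y : ℝ} (hab : a ^ 2 + b ^ 2 = 1) :
    HasRadialDerivAt (sqDist a b) (sqDist a b x y - (1 - x ^ 2 - y ^ 2)) x y := by
  refine ⟨2 * (x - a), 2 * (y - b), ?_, ?_, ?_⟩
  · unfold sqDist
    simpa using (((hasDerivAt_id x).sub_const a).pow 2).add_const ((y - b) ^ 2)
  · unfold sqDist
    simpa using (((hasDerivAt_id y).sub_const b).pow 2).const_add ((x - a) ^ 2)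
  · unfold sqDist; linear_combination -hab

theorem r12sq_eq_sqDist : r12sq = sqDist 1 0 := by
  ext x y; simp [r12sq, sqDist]

theorem r13sq_eq_sqDist : r13sq = sqDist (-(1 / 2)) (√3 / 2) := by
  ext x y; simp [r13sq, sqDist]

theorem r23sq_eq_sqDist : r23sq = sqDist (-(1 / 2)) (-(√3 / 2)) := by
  ext x y; simp [r23sq, sqDist]

section radial

variable {x y : ℝ}

theorem hasRadialDerivAt_r12sq :
    HasRadialDerivAt r12sq (r12sq x y - (1 - x ^ 2 - y ^ 2)) x y := by
  rw [r12sq_eq_sqDist]; exact hasRadialDerivAt_sqDist (by norm_num)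

theorem hasRadialDerivAt_r13sq :
    HasRadialDerivAt r13sq (r13sq x y - (1 - x ^ 2 - y ^ 2)) x y := by
  rw [r13sq_eq_sqDist]
  exact hasRadialDerivAt_sqDist (by norm_num [div_pow])

theorem hasRadialDerivAt_r23sq :
    HasRadialDerivAt r23sq (r23sq x y - (1 - x ^ 2 - y ^ 2)) x y := by
  rw [r23sq_eq_sqDist]
  exact hasRadialDerivAt_sqDist (by norm_num [div_pow])

end radial

theorem hasRadialDerivAt_Ifun (m₁ m₂ m₃ : ℝ) {x y : ℝ} :
    HasRadialDerivAt (Ifun m₁ m₂ m₃)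
      (Ifun m₁ m₂ m₃ x y - (m₁ * m₂ + m₁ * m₃ + m₂ * m₃) / (m₁ + m₂ + m₃) * (1 - x ^ 2 - y ^ 2))
      x y :=
  ((((hasRadialDerivAt_r12sq.const_mul (m₁ * m₂)).add
      (hasRadialDerivAt_r13sq.const_mul (m₁ * m₃))).add
      (hasRadialDerivAt_r23sq.const_mul (m₂ * m₃))).div_const (m₁ + m₂ + m₃)).congr_deriv
    (by unfold Ifun; ring)

def pairTerm (p q : ℝ) : ℝ := (q ^ 2 - p ^ 2) * (1 / p ^ 3 - 1 / q ^ 3)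

section pairTerm

variable {p q : ℝ}

theorem pairTerm_eq (hp : p ≠ 0) (hq : q ≠ 0) :
    pairTerm p q = (q - p) ^ 2 * ((q + p) * (q ^ 2 + q * p + p ^ 2)) / (p ^ 3 * q ^ 3) := by
  unfold pairTerm; field_simp; ring

theorem pairTerm_nonneg (hp : 0 < p) (hq : 0 < q) : 0 ≤ pairTerm p q := by
  rw [pairTerm_eq hp.ne' hq.ne']; positivity

theorem pairTerm_eq_zero_iff (hp : 0 < p) (hq : 0 < q) : pairTerm p q = 0 ↔ p = q := by
  have hpos : 0 < (q + p) * (q ^ 2 + q * p + p ^ 2) := by positivity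
  rw [pairTerm_eq hp.ne' hq.ne', div_eq_zero_iff, or_iff_left (by positivity),
    mul_eq_zero, or_iff_left hpos.ne', sq_eq_zero_iff, sub_eq_zero, eq_comm]

end pairTerm

theorem sum_mul_sum_div_cube_sub_sum_mul_sum_div {p q r : ℝ} (w₁ w₂ w₃ : ℝ)
    (hp : p ≠ 0) (hq : q ≠ 0) (hr : r ≠ 0) :
    (w₁ * p ^ 2 + w₂ * q ^ 2 + w₃ * r ^ 2) * (w₁ / p ^ 3 + w₂ / q ^ 3 + w₃ / r ^ 3)
        - (w₁ + w₂ + w₃) * (w₁ / p + w₂ / q + w₃ / r)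
      = w₁ * w₂ * pairTerm p q + w₁ * w₃ * pairTerm p r + w₂ * w₃ * pairTerm q r := by
  unfold pairTerm; field_simp; ring

theorem sqrt_mul_potential_radial_identity {M S p q r w₁ w₂ w₃ ε : ℝ} (hM : M ≠ 0) (hS : S ≠ 0)
    (hp : p ≠ 0) (hq : q ≠ 0) (hr : r ≠ 0)
    (hI : M * S ^ 2 = w₁ * p ^ 2 + w₂ * q ^ 2 + w₃ * r ^ 2) :
    (S ^ 2 - (w₁ + w₂ + w₃) / M * ε) / (2 * S) * (w₁ / p + w₂ / q + w₃ / r)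
        + S * (-(w₁ * ((p ^ 2 - ε) / (2 * p))) / p ^ 2 + -(w₂ * ((q ^ 2 - ε) / (2 * q))) / q ^ 2
          + -(w₃ * ((r ^ 2 - ε) / (2 * r))) / r ^ 2)
      = ε / (2 * M * S) *
          (w₁ * w₂ * pairTerm p q + w₁ * w₃ * pairTerm p r + w₂ * w₃ * pairTerm q r) := by
  rw [← sum_mul_sum_div_cube_sub_sum_mul_sum_div w₁ w₂ w₃ hp hq hr, ← hI]
  field_simp
  ring

section shape

variable {m₁ m₂ m₃ x y : ℝ}

theorem phifun_eq (ha : 0 < r12sq x y) (hb : 0 < r13sq x y) (hc : 0 < r23sq x y) :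
    phifun m₁ m₂ m₃ x y = m₁ * m₂ * m₃ / (2 * (m₁ + m₂ + m₃) * √(Ifun m₁ m₂ m₃ x y)) *
      (m₁ * pairTerm √(r12sq x y) √(r13sq x y) + m₂ * pairTerm √(r12sq x y) √(r23sq x y)
        + m₃ * pairTerm √(r13sq x y) √(r23sq x y)) := by
  simp only [phifun, pairTerm, Real.sq_sqrt ha.le, Real.sq_sqrt hb.le, Real.sq_sqrt hc.le]
  ring

theorem hasRadialDerivAt_Vfun (ha : 0 < r12sq x y) (hb : 0 < r13sq x y) (hc : 0 < r23sq x y)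
    (hI : 0 < Ifun m₁ m₂ m₃ x y) :
    HasRadialDerivAt (Vfun m₁ m₂ m₃) (phifun m₁ m₂ m₃ x y * (1 - x ^ 2 - y ^ 2)) x y := by
  have hM : m₁ + m₂ + m₃ ≠ 0 := fun h => by simp [Ifun, h] at hI
  have hU := ((((hasRadialDerivAt_r12sq.sqrt ha.ne').const_div (m₁ * m₂)
    (Real.sqrt_ne_zero'.2 ha)).add ((hasRadialDerivAt_r13sq.sqrt hb.ne').const_div (m₁ * m₃)
    (Real.sqrt_ne_zero'.2 hb))).add ((hasRadialDerivAt_r23sq.sqrt hc.ne').const_div (m₂ * m₃)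
    (Real.sqrt_ne_zero'.2 hc)))
  refine (((hasRadialDerivAt_Ifun m₁ m₂ m₃).sqrt hI.ne').mul hU).congr_deriv ?_
  have key := sqrt_mul_potential_radial_identity (ε := 1 - x ^ 2 - y ^ 2) (w₁ := m₁ * m₂)
    (w₂ := m₁ * m₃) (w₃ := m₂ * m₃) hM (Real.sqrt_ne_zero'.2 hI) (Real.sqrt_ne_zero'.2 ha)
    (Real.sqrt_ne_zero'.2 hb) (Real.sqrt_ne_zero'.2 hc)
    (by simp only [Real.sq_sqrt, ha.le, hb.le, hc.le, hI.le]; unfold Ifun; field_simp)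
  rw [phifun_eq ha hb hc]
  simp only [Real.sq_sqrt, ha.le, hb.le, hc.le, hI.le] at key ⊢
  linear_combination key

theorem r12sq_eq_r13sq_and_r13sq_eq_r23sq_iff {x y : ℝ} :
    r12sq x y = r13sq x y ∧ r13sq x y = r23sq x y ↔ x = 0 ∧ y = 0 := by
  have h3 : √3 ^ 2 = 3 := Real.sq_sqrt zero_le_three
  have hs : √3 ≠ 0 := by positivity
  have hdiff₁ : r12sq x y - r13sq x y = √3 * y - 3 * x := by
    unfold r12sq r13sq; linear_combination (-(1 / 4) : ℝ) * h3
  have hdiff₂ : r13sq x y - r23sq x y = -(2 * √3 * y) := by unfold r13sq r23sq; ring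
  rw [← sub_eq_zero, hdiff₁, ← sub_eq_zero (a := r13sq x y), hdiff₂]
  constructor
  · rintro ⟨hx, hy⟩
    obtain rfl : y = 0 := by simpa [hs] using hy
    simpa using hx
  · rintro ⟨rfl, rfl⟩
    simp

theorem Ifun_pos (hm₁ : 0 < m₁) (hm₂ : 0 < m₂) (hm₃ : 0 < m₃) (ha : 0 < r12sq x y)
    (hb : 0 < r13sq x y) (hc : 0 < r23sq x y) : 0 < Ifun m₁ m₂ m₃ x y := by
  unfold Ifun; positivity

theorem phifun_nonneg (hm₁ : 0 < m₁) (hm₂ : 0 < m₂) (hm₃ : 0 < m₃) (ha : 0 < r12sq x y)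
    (hb : 0 < r13sq x y) (hc : 0 < r23sq x y) : 0 ≤ phifun m₁ m₂ m₃ x y := by
  rw [phifun_eq ha hb hc]
  have := pairTerm_nonneg (Real.sqrt_pos.2 ha) (Real.sqrt_pos.2 hb)
  have := pairTerm_nonneg (Real.sqrt_pos.2 ha) (Real.sqrt_pos.2 hc)
  have := pairTerm_nonneg (Real.sqrt_pos.2 hb) (Real.sqrt_pos.2 hc)
  positivity

theorem phifun_eq_zero_iff (hm₁ : 0 < m₁) (hm₂ : 0 < m₂) (hm₃ : 0 < m₃) (ha : 0 < r12sq x y)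
    (hb : 0 < r13sq x y) (hc : 0 < r23sq x y) : phifun m₁ m₂ m₃ x y = 0 ↔ x = 0 ∧ y = 0 := by
  have hI := Ifun_pos hm₁ hm₂ hm₃ ha hb hc
  have hp := Real.sqrt_pos.2 ha
  have hq := Real.sqrt_pos.2 hb
  have hr := Real.sqrt_pos.2 hc
  have := pairTerm_nonneg hp hq
  have := pairTerm_nonneg hp hr
  have := pairTerm_nonneg hq hr
  rw [phifun_eq ha hb hc, mul_eq_zero, or_iff_right (by positivity),
    add_eq_zero_iff_of_nonneg (by positivity) (by positivity),
    add_eq_zero_iff_of_nonneg (by positivity) (by positivity),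
    mul_eq_zero_iff_left hm₁.ne', mul_eq_zero_iff_left hm₂.ne', mul_eq_zero_iff_left hm₃.ne',
    pairTerm_eq_zero_iff hp hq, pairTerm_eq_zero_iff hp hr, pairTerm_eq_zero_iff hq hr,
    Real.sqrt_inj ha.le hb.le, Real.sqrt_inj ha.le hc.le, Real.sqrt_inj hb.le hc.le,
    ← r12sq_eq_r13sq_and_r13sq_eq_r23sq_iff]
  constructor
  · rintro ⟨⟨hab, -⟩, hbc⟩
    exact ⟨hab, hbc⟩
  · rintro ⟨hab, hbc⟩
    exact ⟨⟨hab, hab.trans hbc⟩, hbc⟩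

end shape

theorem radial_derivative_of_shape_potential (m₁ m₂ m₃ : ℝ)
    (hm₁ : 0 < m₁) (hm₂ : 0 < m₂) (hm₃ : 0 < m₃) (x y : ℝ)
    (h12 : (x, y) ≠ (1, 0))
    (h13 : (x, y) ≠ (-(1 / 2), Real.sqrt 3 / 2))
    (h23 : (x, y) ≠ (-(1 / 2), -(Real.sqrt 3 / 2))) :
    ∃ Vx Vy : ℝ,
      HasDerivAt (fun s => Vfun m₁ m₂ m₃ s y) Vx x ∧
      HasDerivAt (fun s => Vfun m₁ m₂ m₃ x s) Vy y ∧
      x * Vx + y * Vy = phifun m₁ m₂ m₃ x y * (1 - x ^ 2 - y ^ 2) ∧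
      0 ≤ phifun m₁ m₂ m₃ x y ∧
      (phifun m₁ m₂ m₃ x y = 0 ↔ x = 0 ∧ y = 0) := by
  have ha : 0 < r12sq x y := r12sq_eq_sqDist ▸ sqDist_pos h12
  have hb : 0 < r13sq x y := r13sq_eq_sqDist ▸ sqDist_pos h13
  have hc : 0 < r23sq x y := r23sq_eq_sqDist ▸ sqDist_pos h23
  obtain ⟨Vx, Vy, hVx, hVy, hV⟩ :=
    hasRadialDerivAt_Vfun ha hb hc (Ifun_pos hm₁ hm₂ hm₃ ha hb hc)
  exact ⟨Vx, Vy, hVx, hVy, hV, phifun_nonneg hm₁ hm₂ hm₃ ha hb hc,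
    phifun_eq_zero_iff hm₁ hm₂ hm₃ ha hb hc⟩

end
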